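/- For every c ∈ ℂ and all f, u, φ ∈ C∞₂π(ℝ,ℂ), the Sturm–Liouville operator A(φ) = 2·c·φ″ + u·φ satisfies the Kirillov–Segal identity: ( f·(Aφ)′ + (3/2)·f′·(Aφ) ) − A( f·φ′ − (1/2)·f′·φ ) = ( f·u′ + 2·f′·u + c·f‴ )·φ. In other words, the natural action L_f(A) = L_f^{3/2}∘A − A∘L_f^{−1/2} of the vector field f·d/dx on Sturm–Liouville operators is the operator of multiplication by the Virasoro coadjoint action f·u′ + 2·f′·u + c·f‴ of f on the quadratic density u·dx². -/

import Mathlib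

open Real
open scoped ContDiff

/-!
Writing `A = 2c·D² + u`, the identity splits into two parts. Multiplication by the quadratic
density `u` obeys the Leibniz rule `L_f^{3/2}(uφ) = (L_f^2 u)·φ + u·L_f^{-1/2} φ`, which
produces `f u' + 2 f' u`. The second derivative intertwines `(-1/2)`- and `(3/2)`-densities up to
a zeroth-order term: `L_f^{3/2}(φ'') - (L_f^{-1/2} φ)'' = ½ f''' φ`, which produces `c f'''`.
-/

theorem deriv_deriv_eq_iteratedDeriv_two {𝕜 F : Type*} [NontriviallyNormedField 𝕜]
    [NormedAddCommGroup F] [NormedSpace 𝕜 F] (g : 𝕜 → F) :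
    deriv (deriv g) = iteratedDeriv 2 g := by
  rw [iteratedDeriv_succ, iteratedDeriv_one]

noncomputable def densityLieDeriv (l : ℂ) (f φ : ℝ → ℂ) : ℝ → ℂ :=
  fun t => f t * deriv φ t + l * deriv f t * φ t

noncomputable def sturmLiouville (c : ℂ) (u φ : ℝ → ℂ) : ℝ → ℂ :=
  fun t => 2 * c * deriv (deriv φ) t + u t * φ t

section densityLieDeriv

variable {f g φ ψ : ℝ → ℂ}

theorem densityLieDeriv_add {x : ℝ} (l : ℂ) (hφ : DifferentiableAt ℝ φ x)
    (hψ : DifferentiableAt ℝ ψ x) :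
    densityLieDeriv l f (fun t => φ t + ψ t) x
      = densityLieDeriv l f φ x + densityLieDeriv l f ψ x := by
  simp only [densityLieDeriv, deriv_fun_add hφ hψ]
  ring

theorem densityLieDeriv_const_mul (l a : ℂ) (x : ℝ) :
    densityLieDeriv l f (fun t => a * φ t) x = a * densityLieDeriv l f φ x := by
  simp only [densityLieDeriv, deriv_const_mul_field']
  ring

theorem densityLieDeriv_mul {x : ℝ} (l m : ℂ) (hg : DifferentiableAt ℝ g x)
    (hφ : DifferentiableAt ℝ φ x) :
    densityLieDeriv (m + l) f (fun t => g t * φ t) x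
      = densityLieDeriv m f g x * φ x + g x * densityLieDeriv l f φ x := by
  simp only [densityLieDeriv, deriv_fun_mul hg hφ]
  ring

/-- Bol's lemma for `D²`. -/
theorem densityLieDeriv_deriv_deriv_sub (hf : ContDiff ℝ 3 f) (hφ : ContDiff ℝ 3 φ) (x : ℝ) :
    densityLieDeriv (3/2) f (deriv (deriv φ)) x - deriv (deriv (densityLieDeriv (-1/2) f φ)) x
      = (1/2) * deriv (deriv (deriv f)) x * φ x := by
  have hf₂ : ContDiff ℝ 2 f := hf.of_le (by norm_num)
  have hφ₂ : ContDiff ℝ 2 φ := hφ.of_le (by norm_num)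
  have hf' : ContDiff ℝ 2 (deriv f) := hf.deriv'
  have hφ' : ContDiff ℝ 2 (deriv φ) := hφ.deriv'
  have hsplit : densityLieDeriv (-1/2) f φ
      = (fun t => f t * deriv φ t) + (-1/2 : ℂ) • fun t => deriv f t * φ t := by
    funext t
    simp only [densityLieDeriv, Pi.add_apply, Pi.smul_apply, smul_eq_mul]
    ring
  rw [hsplit, deriv_deriv_eq_iteratedDeriv_two (_ + _),
    iteratedDeriv_add (by fun_prop) (by fun_prop), iteratedDeriv_const_smul_field,
    iteratedDeriv_fun_mul hf₂.contDiffAt hφ'.contDiffAt,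
    iteratedDeriv_fun_mul hf'.contDiffAt hφ₂.contDiffAt]
  simp only [densityLieDeriv, Nat.reduceAdd, ← iteratedDeriv_succ', iteratedDeriv_succ,
    Finset.sum_range_succ, Finset.range_one, Finset.sum_singleton, Nat.choose_zero_right,
    Nat.cast_one, iteratedDeriv_zero, one_mul, tsub_zero, Nat.choose_succ_self_right,
    Nat.cast_ofNat, Nat.add_one_sub_one, Nat.choose_self, tsub_self, smul_eq_mul, one_div]
  ring

end densityLieDeriv

theorem densityLieDeriv_sturmLiouville_sub (c : ℂ) {f u φ : ℝ → ℂ} {x : ℝ}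
    (hf : ContDiff ℝ 3 f) (hu : DifferentiableAt ℝ u x) (hφ : ContDiff ℝ 3 φ) :
    densityLieDeriv (3/2) f (sturmLiouville c u φ) x
        - sturmLiouville c u (densityLieDeriv (-1/2) f φ) x
      = (densityLieDeriv 2 f u x + c * deriv (deriv (deriv f)) x) * φ x := by
  have hφ₀ : DifferentiableAt ℝ φ x := hφ.differentiable (by norm_num) x
  have hφ₂ : DifferentiableAt ℝ (deriv (deriv φ)) x :=
    (hφ.iterate_deriv' 1 2).differentiable (by norm_num) x
  have hlin : densityLieDeriv (3/2) f (sturmLiouville c u φ) x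
      = 2 * c * densityLieDeriv (3/2) f (deriv (deriv φ)) x
        + densityLieDeriv (3/2) f (fun t => u t * φ t) x := by
    unfold sturmLiouville
    rw [densityLieDeriv_add _ (hφ₂.const_mul _) (hu.fun_mul hφ₀),
      densityLieDeriv_const_mul]
  have hleibniz := densityLieDeriv_mul (f := f) (-1/2) 2 hu hφ₀
  rw [show (2 + -1/2 : ℂ) = 3/2 by norm_num] at hleibniz
  rw [hlin, hleibniz]
  unfold sturmLiouville
  linear_combination 2 * c * densityLieDeriv_deriv_deriv_sub hf hφ x

theorem kirillov_segal_identity (c : ℂ) (f u φ : ℝ → ℂ)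
    (hf : ContDiff ℝ ∞ f)
    (hu : ContDiff ℝ ∞ u)
    (hφ : ContDiff ℝ ∞ φ) (x : ℝ) :
    (f x * deriv (fun t => 2 * c * deriv (deriv φ) t + u t * φ t) x
        + (3/2 : ℂ) * deriv f x * (2 * c * deriv (deriv φ) x + u x * φ x))
      - (2 * c * deriv (deriv (fun t => f t * deriv φ t - (1/2 : ℂ) * deriv f t * φ t)) x
        + u x * (f x * deriv φ x - (1/2 : ℂ) * deriv f x * φ x))
      = (f x * deriv u x + 2 * deriv f x * u x + c * deriv (deriv (deriv f)) x) * φ x := by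
  have hweight (t : ℝ) :
      f t * deriv φ t - (1/2 : ℂ) * deriv f t * φ t = densityLieDeriv (-1/2) f φ t := by
    simp only [densityLieDeriv]
    ring
  simp only [hweight]
  exact densityLieDeriv_sturmLiouville_sub c (contDiff_infty.mp hf 3)
    ((contDiff_infty.mp hu 1).differentiable one_ne_zero x) (contDiff_infty.mp hφ 3)
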